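/- For any two distinct density matrices ρ₁, ρ₂, the optimal 1 → n virtual cloning cost satisfies the upper bound η ≤ 4/‖ρ₁ − ρ₂‖₁ − 1, uniformly in n. The bound is achieved by the HPTP map D̃ = η₊D₊ − η₋D₋ with η₊ = 2/‖ρ₁ − ρ₂‖₁, η₋ = η₊ − 1, where D₊(ρ) = Tr(ρP₊)|1⟩⟨1| + Tr(ρP₋)|2⟩⟨2| and D₋(ρ) = p₁|1⟩⟨1| + p₂|2⟩⟨2| with (p₁,p₂) ∝ (Tr(ρ₂P₊), Tr(ρ₁P₋)); this D̃ satisfies D̃(ρ₁) = |1⟩⟨1| and D̃(ρ₂) = |2⟩⟨2|. -/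

import Mathlib

open Matrix Kronecker BigOperators
open scoped ComplexOrder

noncomputable def traceNorm {ι : Type*} [Fintype ι] [DecidableEq ι] (A : Matrix ι ι ℂ) : ℝ :=
  (((Matrix.posSemidef_conjTranspose_mul_self A).1.eigenvectorUnitary.1 *
    diagonal (((↑) : ℝ → ℂ) ∘ (Real.sqrt ·) ∘ (Matrix.posSemidef_conjTranspose_mul_self A).1.eigenvalues) *
    (star (Matrix.posSemidef_conjTranspose_mul_self A).1.eigenvectorUnitary : Matrix ι ι ℂ)).trace).re

def IsDensity {ι : Type*} [Fintype ι] [DecidableEq ι] (ρ : Matrix ι ι ℂ) : Prop :=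
  ρ.PosSemidef ∧ ρ.trace = 1

noncomputable def kronPow {ι : Type*} [Fintype ι] (A : Matrix ι ι ℂ) (k : ℕ) :
    Matrix (Fin k → ι) (Fin k → ι) ℂ :=
  Matrix.of fun x y => ∏ i, A (x i) (y i)

def choiMatrix {ι κ : Type*} [Fintype ι] [DecidableEq ι] [Fintype κ]
    (Λ : Matrix ι ι ℂ →ₗ[ℂ] Matrix κ κ ℂ) : Matrix (ι × κ) (ι × κ) ℂ :=
  Matrix.of fun p q => Λ (Matrix.single p.1 q.1 1) p.2 q.2

def IsCPTP {ι κ : Type*} [Fintype ι] [DecidableEq ι] [Fintype κ]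
    (Λ : Matrix ι ι ℂ →ₗ[ℂ] Matrix κ κ ℂ) : Prop :=
  (choiMatrix Λ).PosSemidef ∧ ∀ A, (Λ A).trace = A.trace

def IsHPTP {ι κ : Type*} [Fintype ι] [Fintype κ]
    (Λ : Matrix ι ι ℂ →ₗ[ℂ] Matrix κ κ ℂ) : Prop :=
  (∀ A, A.IsHermitian → (Λ A).IsHermitian) ∧ ∀ A, (Λ A).trace = A.trace

noncomputable def proj {ι : Type*} (ψ : ι → ℂ) : Matrix ι ι ℂ := Matrix.vecMulVec ψ (star ψ)

noncomputable def overlap {ι : Type*} [Fintype ι] (ψ φ : ι → ℂ) : ℂ := ∑ i, (starRingEnd ℂ) (ψ i) * φ i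

noncomputable def cloneCostSet {d m : ℕ} (ρ : Fin m → Matrix (Fin d) (Fin d) ℂ) (n : ℕ) : Set ℝ :=
  {c | ∃ (Λp Λm : Matrix (Fin d) (Fin d) ℂ →ₗ[ℂ] Matrix (Fin n → Fin d) (Fin n → Fin d) ℂ)
      (lp lm : ℝ), IsCPTP Λp ∧ IsCPTP Λm ∧ 0 ≤ lp ∧ 0 ≤ lm ∧ lp - lm = 1 ∧
      (∀ i, (lp : ℂ) • Λp (ρ i) - (lm : ℂ) • Λm (ρ i) = kronPow (ρ i) n) ∧ c = lp + lm}

noncomputable def E00 : Matrix (Fin 2) (Fin 2) ℂ := !![1, 0; 0, 0]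
noncomputable def E11 : Matrix (Fin 2) (Fin 2) ℂ := !![0, 0; 0, 1]


set_option linter.unusedSectionVars false
set_option linter.unusedVariables false
set_option maxHeartbeats 1000000

section Aux

variable {ι κ : Type*} [Fintype ι] [DecidableEq ι] [Fintype κ] [DecidableEq κ]

lemma psd_trace_nonneg {M : Matrix ι ι ℂ} (hM : M.PosSemidef) : 0 ≤ M.trace := by
  rw [Matrix.trace]
  refine Finset.sum_nonneg fun i _ => ?_
  exact hM.diag_nonneg

lemma psd_eq_ctm {M : Matrix ι ι ℂ} (hM : M.PosSemidef) : ∃ B : Matrix ι ι ℂ, M = Bᴴ * B := by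
  refine ⟨Matrix.diagonal (fun i => ((Real.sqrt (hM.1.eigenvalues i) : ℝ) : ℂ)) *
    (star (hM.1.eigenvectorUnitary : Matrix ι ι ℂ)), ?_⟩
  rw [Matrix.conjTranspose_mul, Matrix.diagonal_conjTranspose, ← Matrix.star_eq_conjTranspose,
    star_star]
  conv_lhs => rw [hM.1.spectral_theorem, Unitary.conjStarAlgAut_apply]
  conv_rhs => rw [← Matrix.mul_assoc, Matrix.mul_assoc (hM.1.eigenvectorUnitary : Matrix ι ι ℂ),
    Matrix.diagonal_mul_diagonal]
  congr 2
  funext i j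
  simp [Matrix.diagonal_apply, Pi.star_apply, Complex.star_def, ← Complex.ofReal_mul,
    Real.mul_self_sqrt (hM.eigenvalues_nonneg i)]

lemma psd_trace_mul_nonneg {A B : Matrix ι ι ℂ} (hA : A.PosSemidef) (hB : B.PosSemidef) :
    0 ≤ (A * B).trace := by
  obtain ⟨C, rfl⟩ := psd_eq_ctm hB
  rw [← Matrix.mul_assoc, Matrix.trace_mul_cycle]
  exact psd_trace_nonneg (hA.mul_mul_conjTranspose_same C)

lemma psd_trace_mul_real {A B : Matrix ι ι ℂ} (hA : A.PosSemidef) (hB : B.PosSemidef) :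
    ∃ r : ℝ, 0 ≤ r ∧ (A * B).trace = (r : ℂ) := by
  obtain ⟨hre, him⟩ := Complex.nonneg_iff.mp (psd_trace_mul_nonneg hA hB)
  exact ⟨((A*B).trace).re, hre, by apply Complex.ext <;> simp [← him]⟩

lemma kronPow_mul' (A B : Matrix ι ι ℂ) (k : ℕ) :
    kronPow A k * kronPow B k = kronPow (A * B) k := by
  ext x y
  simp only [kronPow, Matrix.mul_apply, Matrix.of_apply]
  rw [Finset.prod_univ_sum]
  simp [Finset.prod_mul_distrib, Fintype.piFinset_univ]

lemma kronPow_conjTranspose' (A : Matrix ι ι ℂ) (k : ℕ) :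
    (kronPow A k)ᴴ = kronPow Aᴴ k := by
  ext x y
  simp [kronPow, Matrix.conjTranspose_apply, map_prod]

lemma kronPow_trace' (A : Matrix ι ι ℂ) (k : ℕ) :
    (kronPow A k).trace = A.trace ^ k := by
  have h : A.trace ^ k = ∏ _i : Fin k, A.trace := by simp
  rw [h]
  simp only [Matrix.trace, Matrix.diag]
  rw [Finset.prod_univ_sum]
  simp [kronPow, Fintype.piFinset_univ]

lemma kronPow_posSemidef' {A : Matrix ι ι ℂ} (hA : A.PosSemidef) (k : ℕ) :
    (kronPow A k).PosSemidef := by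
  obtain ⟨B, rfl⟩ := psd_eq_ctm hA
  rw [← kronPow_mul', ← kronPow_conjTranspose']
  exact Matrix.posSemidef_conjTranspose_mul_self _

lemma kron_conjTranspose' (A : Matrix ι ι ℂ) (B : Matrix κ κ ℂ) :
    (A ⊗ₖ B)ᴴ = Aᴴ ⊗ₖ Bᴴ := by
  ext ⟨i, x⟩ ⟨j, y⟩
  simp [Matrix.conjTranspose_apply, Matrix.kroneckerMap_apply, mul_comm]

lemma kron_posSemidef {A : Matrix ι ι ℂ} {B : Matrix κ κ ℂ}
    (hA : A.PosSemidef) (hB : B.PosSemidef) : (A ⊗ₖ B).PosSemidef := by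
  obtain ⟨C, rfl⟩ := psd_eq_ctm hA
  obtain ⟨D, rfl⟩ := psd_eq_ctm hB
  rw [Matrix.mul_kronecker_mul, ← kron_conjTranspose']
  exact Matrix.posSemidef_conjTranspose_mul_self _

lemma trace_stdBasisMatrix_mul (i j : ι) (P : Matrix ι ι ℂ) :
    (Matrix.single i j 1 * P).trace = P j i := by
  simp [Matrix.trace, Matrix.diag, Matrix.mul_apply, Matrix.single, ite_and,
    Finset.sum_ite_eq]

noncomputable def cloneMap (P Q : Matrix ι ι ℂ) (σ τ : Matrix κ κ ℂ) :
    Matrix ι ι ℂ →ₗ[ℂ] Matrix κ κ ℂ where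
  toFun ρ := (ρ * P).trace • σ + (ρ * Q).trace • τ
  map_add' ρ₁ ρ₂ := by simp [Matrix.add_mul, add_smul]; module
  map_smul' c ρ := by simp [Matrix.smul_mul, smul_smul, smul_add]

lemma cloneMap_apply (P Q : Matrix ι ι ℂ) (σ τ : Matrix κ κ ℂ) (ρ : Matrix ι ι ℂ) :
    cloneMap P Q σ τ ρ = (ρ * P).trace • σ + (ρ * Q).trace • τ := rfl

lemma choiMatrix_cloneMap (P Q : Matrix ι ι ℂ) (σ τ : Matrix κ κ ℂ) :
    choiMatrix (cloneMap P Q σ τ) = Pᵀ ⊗ₖ σ + Qᵀ ⊗ₖ τ := by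
  ext ⟨i, x⟩ ⟨j, y⟩
  simp [choiMatrix, cloneMap_apply, trace_stdBasisMatrix_mul, Matrix.kroneckerMap_apply,
    Matrix.transpose_apply]

lemma cloneMap_choi_posSemidef {P Q : Matrix ι ι ℂ} {σ τ : Matrix κ κ ℂ}
    (hP : P.PosSemidef) (hQ : Q.PosSemidef) (hσ : σ.PosSemidef) (hτ : τ.PosSemidef) :
    (choiMatrix (cloneMap P Q σ τ)).PosSemidef := by
  rw [choiMatrix_cloneMap]
  exact (kron_posSemidef hP.transpose hσ).add (kron_posSemidef hQ.transpose hτ)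

lemma cloneMap_trace {P Q : Matrix ι ι ℂ} {σ τ : Matrix κ κ ℂ}
    (hPQ : P + Q = 1) (hσ : σ.trace = 1) (hτ : τ.trace = 1) (ρ : Matrix ι ι ℂ) :
    (cloneMap P Q σ τ ρ).trace = ρ.trace := by
  rw [cloneMap_apply, Matrix.trace_add, Matrix.trace_smul, Matrix.trace_smul, hσ, hτ,
    smul_eq_mul, smul_eq_mul, mul_one, mul_one, ← Matrix.trace_add, ← Matrix.mul_add, hPQ,
    Matrix.mul_one]

lemma smul_one_posSemidef {q : ℝ} (hq : 0 ≤ q) :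
    (((q : ℂ)) • (1 : Matrix ι ι ℂ)).PosSemidef := by
  have h : ((q : ℂ)) • (1 : Matrix ι ι ℂ) = Matrix.diagonal (fun _ => (q : ℂ)) := by
    ext i j
    by_cases hij : i = j <;> simp [Matrix.one_apply, Matrix.diagonal, hij]
  rw [h]
  exact Matrix.PosSemidef.diagonal fun i => Complex.zero_le_real.mpr hq

lemma unitary_conj_trace (U : Matrix.unitaryGroup ι ℂ) (D : Matrix ι ι ℂ) :
    ((U : Matrix ι ι ℂ) * D * (star U : Matrix ι ι ℂ)).trace = D.trace := by
  rw [Matrix.trace_mul_cycle]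
  rw [show (star U : Matrix ι ι ℂ) * (U : Matrix ι ι ℂ) = 1 from U.2.1, Matrix.one_mul]

lemma unitary_conj_mul (U : Matrix.unitaryGroup ι ℂ) (D E : Matrix ι ι ℂ) :
    ((U : Matrix ι ι ℂ) * D * (star U : Matrix ι ι ℂ)) *
      ((U : Matrix ι ι ℂ) * E * (star U : Matrix ι ι ℂ)) =
    (U : Matrix ι ι ℂ) * (D * E) * (star U : Matrix ι ι ℂ) := by
  have h : (star U : Matrix ι ι ℂ) * (U : Matrix ι ι ℂ) = 1 := U.2.1
  rw [show (U : Matrix ι ι ℂ) * D * (star U : Matrix ι ι ℂ) * ((U : Matrix ι ι ℂ) * E *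
    (star U : Matrix ι ι ℂ)) = (U : Matrix ι ι ℂ) * D * ((star U : Matrix ι ι ℂ) *
    (U : Matrix ι ι ℂ)) * E * (star U : Matrix ι ι ℂ) by noncomm_ring, h, Matrix.mul_one]
  noncomm_ring

lemma traceNorm_hermitian (Δ : Matrix ι ι ℂ) (hΔ : Δ.IsHermitian) :
    traceNorm Δ = ∑ i, |hΔ.eigenvalues i| := by
  set U := hΔ.eigenvectorUnitary with hU
  set e := hΔ.eigenvalues with he
  set S : Matrix ι ι ℂ := (U : Matrix ι ι ℂ) * Matrix.diagonal (fun i => ((|e i| : ℝ) : ℂ)) *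
    (star U : Matrix ι ι ℂ) with hS
  have hdiagpsd : (Matrix.diagonal (fun i => ((|e i| : ℝ) : ℂ))).PosSemidef :=
    Matrix.PosSemidef.diagonal fun i => Complex.zero_le_real.mpr (abs_nonneg _)
  have hSpsd : S.PosSemidef := by
    rw [hS, Matrix.star_eq_conjTranspose]
    exact hdiagpsd.mul_mul_conjTranspose_same _
  have hsq : S ^ 2 = Δᴴ * Δ := by
    rw [hΔ.eq, pow_two, hS, unitary_conj_mul, Matrix.diagonal_mul_diagonal]
    conv_rhs => rw [hΔ.spectral_theorem]
    rw [Unitary.conjStarAlgAut_apply, ← hU, ← he, unitary_conj_mul,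
      Matrix.diagonal_mul_diagonal]
    congr 2 with i
    simp only [Function.comp_apply]
    norm_cast
    simp [Matrix.diagonal, abs_mul_abs_self]
  have hX := Matrix.posSemidef_conjTranspose_mul_self Δ
  have hRpsd : ((Matrix.posSemidef_conjTranspose_mul_self Δ).1.eigenvectorUnitary.1 *
      diagonal (((↑) : ℝ → ℂ) ∘ (Real.sqrt ·) ∘ (Matrix.posSemidef_conjTranspose_mul_self Δ).1.eigenvalues) *
      (star (Matrix.posSemidef_conjTranspose_mul_self Δ).1.eigenvectorUnitary : Matrix ι ι ℂ)).PosSemidef := by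
    rw [Matrix.star_eq_conjTranspose]
    exact (Matrix.PosSemidef.diagonal fun i => Complex.zero_le_real.mpr (Real.sqrt_nonneg _)
      ).mul_mul_conjTranspose_same _
  have hRsq : ((Matrix.posSemidef_conjTranspose_mul_self Δ).1.eigenvectorUnitary.1 *
      diagonal (((↑) : ℝ → ℂ) ∘ (Real.sqrt ·) ∘ (Matrix.posSemidef_conjTranspose_mul_self Δ).1.eigenvalues) *
      (star (Matrix.posSemidef_conjTranspose_mul_self Δ).1.eigenvectorUnitary : Matrix ι ι ℂ)) *
      ((Matrix.posSemidef_conjTranspose_mul_self Δ).1.eigenvectorUnitary.1 *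
      diagonal (((↑) : ℝ → ℂ) ∘ (Real.sqrt ·) ∘ (Matrix.posSemidef_conjTranspose_mul_self Δ).1.eigenvalues) *
      (star (Matrix.posSemidef_conjTranspose_mul_self Δ).1.eigenvectorUnitary : Matrix ι ι ℂ)) = Δᴴ * Δ := by
    rw [unitary_conj_mul, Matrix.diagonal_mul_diagonal]
    conv_rhs => rw [(Matrix.posSemidef_conjTranspose_mul_self Δ).1.spectral_theorem,
      Unitary.conjStarAlgAut_apply]
    congr 2
    funext i j
    simp [Matrix.diagonal_apply, ← Complex.ofReal_mul, Real.mul_self_sqrt (hX.eigenvalues_nonneg i)]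
  have hsqrt : ((Matrix.posSemidef_conjTranspose_mul_self Δ).1.eigenvectorUnitary.1 *
      diagonal (((↑) : ℝ → ℂ) ∘ (Real.sqrt ·) ∘ (Matrix.posSemidef_conjTranspose_mul_self Δ).1.eigenvalues) *
      (star (Matrix.posSemidef_conjTranspose_mul_self Δ).1.eigenvectorUnitary : Matrix ι ι ℂ)) = S := by
    open scoped MatrixOrder in
    exact (CFC.sqrt_unique hRsq (Matrix.nonneg_iff_posSemidef.mpr hRpsd)).symm.trans
      (CFC.sqrt_unique ((pow_two S).symm.trans hsq) (Matrix.nonneg_iff_posSemidef.mpr hSpsd))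
  unfold traceNorm
  rw [hsqrt, hS, unitary_conj_trace, Matrix.trace_diagonal]
  simp

lemma traceNorm_pos (Δ : Matrix ι ι ℂ) (hΔ : Δ.IsHermitian) (h0 : Δ ≠ 0) :
    0 < traceNorm Δ := by
  rw [traceNorm_hermitian Δ hΔ]
  rcases (Finset.sum_nonneg (fun i _ => abs_nonneg (hΔ.eigenvalues i))).lt_or_eq with h | h
  · exact h
  · exfalso
    apply h0
    have hall : ∀ i, hΔ.eigenvalues i = 0 := by
      intro i
      have := (Finset.sum_eq_zero_iff_of_nonneg (fun i _ => abs_nonneg (hΔ.eigenvalues i))).mp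
        h.symm i (Finset.mem_univ i)
      exact abs_eq_zero.mp this
    have := hΔ.spectral_theorem
    rw [show Matrix.diagonal (RCLike.ofReal ∘ hΔ.eigenvalues) = (0 : Matrix ι ι ℂ) by
      ext i j; simp [Matrix.diagonal, hall]] at this
    simpa using this

lemma helstrom (Δ : Matrix ι ι ℂ) (hΔ : Δ.IsHermitian) :
    ∃ Pp Pm : Matrix ι ι ℂ, Pp.PosSemidef ∧ Pm.PosSemidef ∧ Pp + Pm = 1 ∧
      ((Pp - Pm) * Δ).trace = ((traceNorm Δ : ℝ) : ℂ) := by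
  set U := hΔ.eigenvectorUnitary with hU
  set e := hΔ.eigenvalues with he
  refine ⟨(U : Matrix ι ι ℂ) * Matrix.diagonal (fun i => if 0 ≤ e i then (1:ℂ) else 0) *
      (star U : Matrix ι ι ℂ),
    (U : Matrix ι ι ℂ) * Matrix.diagonal (fun i => if 0 ≤ e i then (0:ℂ) else 1) *
      (star U : Matrix ι ι ℂ), ?_, ?_, ?_, ?_⟩
  · have hd : (Matrix.diagonal (fun i => if 0 ≤ e i then (1:ℂ) else 0)).PosSemidef :=
      Matrix.PosSemidef.diagonal fun i => by split <;> norm_num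
    have := hd.mul_mul_conjTranspose_same (U : Matrix ι ι ℂ)
    simpa [Matrix.star_eq_conjTranspose] using this
  · have hd : (Matrix.diagonal (fun i => if 0 ≤ e i then (0:ℂ) else 1)).PosSemidef :=
      Matrix.PosSemidef.diagonal fun i => by split <;> norm_num
    have := hd.mul_mul_conjTranspose_same (U : Matrix ι ι ℂ)
    simpa [Matrix.star_eq_conjTranspose] using this
  · rw [← Matrix.add_mul, ← Matrix.mul_add, Matrix.diagonal_add]
    have : (fun i => (if 0 ≤ e i then (1:ℂ) else 0) + (if 0 ≤ e i then (0:ℂ) else 1)) =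
        fun _ => (1:ℂ) := by funext i; by_cases h : 0 ≤ e i <;> simp [h]
    rw [this, Matrix.diagonal_one, Matrix.mul_one]
    exact U.2.2
  · have hdsub : (Matrix.diagonal fun i => if 0 ≤ e i then (1:ℂ) else 0) -
        Matrix.diagonal (fun i => if 0 ≤ e i then (0:ℂ) else 1) =
        Matrix.diagonal (fun i => if 0 ≤ e i then (1:ℂ) else -1) := by
      have hf : (fun i => ((if 0 ≤ e i then (1:ℂ) else 0) - if 0 ≤ e i then (0:ℂ) else 1)) =
          (fun i => if 0 ≤ e i then (1:ℂ) else -1) := by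
        funext i; by_cases h : 0 ≤ e i <;> simp [h]
      rw [Matrix.diagonal_sub, hf]
    rw [← Matrix.sub_mul, ← Matrix.mul_sub, hdsub]
    conv_lhs => rw [hΔ.spectral_theorem]
    rw [Unitary.conjStarAlgAut_apply, ← hU, ← he, unitary_conj_mul,
      Matrix.diagonal_mul_diagonal, unitary_conj_trace,
      Matrix.trace_diagonal, traceNorm_hermitian Δ hΔ, ← he]
    push_cast
    refine Finset.sum_congr rfl fun i _ => ?_
    by_cases h : 0 ≤ e i
    · simp [h, abs_of_nonneg h]
    · simp [h, abs_of_neg (lt_of_not_ge h)]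

lemma keyR {T α β q₁ q₂ : ℝ} (hT : 0 < T) (hα : 0 ≤ α) (hβ : 0 ≤ β)
    (hab : α + β = 1 - T/2) (hq1 : (α+β) * q₁ = α) (hq2 : (α+β) * q₂ = β) :
    (2/T)*(1-β) - (2/T-1)*q₁ = 1 ∧ (2/T)*β - (2/T-1)*q₂ = 0 ∧
    (2/T)*α - (2/T-1)*q₁ = 0 ∧ (2/T)*(1-α) - (2/T-1)*q₂ = 1 := by
  have hm : 2/T - 1 = 2*(α+β)/T := by field_simp; linarith
  have e1 : (2/T-1)*q₁ = 2*α/T := by rw [hm, div_mul_eq_mul_div, mul_assoc, hq1]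
  have e2 : (2/T-1)*q₂ = 2*β/T := by rw [hm, div_mul_eq_mul_div, mul_assoc, hq2]
  refine ⟨?_, ?_, ?_, ?_⟩ <;> [rw [e1]; rw [e2]; rw [e1]; rw [e2]] <;> field_simp <;> linarith

lemma two_smul_combo {X Y : Matrix κ κ ℂ} (a b c d : ℂ) :
    (a • X + b • Y) - (c • X + d • Y) = (a - c) • X + (b - d) • Y := by module

end Aux
theorem virtual_cloning_stmt19 {d : ℕ} (ρ₁ ρ₂ : Matrix (Fin d) (Fin d) ℂ)
    (h₁ : IsDensity ρ₁) (h₂ : IsDensity ρ₂) (hne : ρ₁ ≠ ρ₂) :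
    (∀ n : ℕ, sInf (cloneCostSet ![ρ₁, ρ₂] n) ≤ 4 / traceNorm (ρ₁ - ρ₂) - 1) ∧
    ∃ Pp Pm : Matrix (Fin d) (Fin d) ℂ, Pp.PosSemidef ∧ Pm.PosSemidef ∧ Pp + Pm = 1 ∧
      ((Pp - Pm) * (ρ₁ - ρ₂)).trace = (traceNorm (ρ₁ - ρ₂) : ℂ) ∧
      (let ηp : ℂ := ((2 / traceNorm (ρ₁ - ρ₂) : ℝ) : ℂ);
       let ηm : ℂ := ηp - 1;
       let q₁ : ℂ := (ρ₂ * Pp).trace / ((ρ₂ * Pp).trace + (ρ₁ * Pm).trace);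
       let q₂ : ℂ := (ρ₁ * Pm).trace / ((ρ₂ * Pp).trace + (ρ₁ * Pm).trace);
       let Dp : Matrix (Fin d) (Fin d) ℂ → Matrix (Fin 2) (Fin 2) ℂ :=
         fun ρ => (ρ * Pp).trace • E00 + (ρ * Pm).trace • E11;
       let Dm : Matrix (Fin d) (Fin d) ℂ → Matrix (Fin 2) (Fin 2) ℂ :=
         fun _ => q₁ • E00 + q₂ • E11;
       ηp • Dp ρ₁ - ηm • Dm ρ₁ = E00 ∧ ηp • Dp ρ₂ - ηm • Dm ρ₂ = E11) := by
  have hΔh : (ρ₁ - ρ₂).IsHermitian := h₁.1.1.sub h₂.1.1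
  set T : ℝ := traceNorm (ρ₁ - ρ₂) with hTdef
  have hT : 0 < T := traceNorm_pos _ hΔh (sub_ne_zero.mpr hne)
  obtain ⟨Pp, Pm, hPp, hPm, hsum, htr⟩ := helstrom (ρ₁ - ρ₂) hΔh
  rw [← hTdef] at htr
  obtain ⟨α, hα, ha⟩ := psd_trace_mul_real h₂.1 hPp
  obtain ⟨β, hβ, hb⟩ := psd_trace_mul_real h₁.1 hPm
  have hsum1 : (ρ₁*Pp).trace + (ρ₁*Pm).trace = 1 := by
    rw [← Matrix.trace_add, ← Matrix.mul_add, hsum, Matrix.mul_one, h₁.2]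
  have hsum2 : (ρ₂*Pp).trace + (ρ₂*Pm).trace = 1 := by
    rw [← Matrix.trace_add, ← Matrix.mul_add, hsum, Matrix.mul_one, h₂.2]
  have expand : ((Pp - Pm) * (ρ₁ - ρ₂)).trace =
      (ρ₁*Pp).trace - (ρ₂*Pp).trace - (ρ₁*Pm).trace + (ρ₂*Pm).trace := by
    rw [Matrix.sub_mul, Matrix.mul_sub, Matrix.mul_sub, Matrix.trace_sub, Matrix.trace_sub,
      Matrix.trace_sub, Matrix.trace_mul_comm Pp ρ₁, Matrix.trace_mul_comm Pp ρ₂,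
      Matrix.trace_mul_comm Pm ρ₁, Matrix.trace_mul_comm Pm ρ₂]
    ring
  have hcc : ((2 - 2*(α+β) : ℝ) : ℂ) = ((T:ℝ):ℂ) := by
    push_cast
    linear_combination htr - expand - hsum1 - hsum2 + 2*ha + 2*hb
  have habR : α + β = 1 - T/2 := by
    have := Complex.ofReal_inj.mp hcc
    linarith
  have hz0 : α + β = 0 → α = 0 ∧ β = 0 := fun h => ⟨by linarith, by linarith⟩
  have h1p : (ρ₁*Pp).trace = ((1 - β : ℝ) : ℂ) := by push_cast; linear_combination hsum1 - hb
  have h2m : (ρ₂*Pm).trace = ((1 - α : ℝ) : ℂ) := by push_cast; linear_combination hsum2 - ha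
  have hlm0 : (0:ℝ) ≤ 2/T - 1 := by
    rw [sub_nonneg, le_div_iff₀ hT]
    linarith
  have hlp0 : (0:ℝ) ≤ 2/T := by positivity
  constructor
  · intro n
    have hσ₁ := kronPow_posSemidef' h₁.1 n
    have hσ₂ := kronPow_posSemidef' h₂.1 n
    have ht₁ : (kronPow ρ₁ n).trace = 1 := by rw [kronPow_trace', h₁.2, one_pow]
    have ht₂ : (kronPow ρ₂ n).trace = 1 := by rw [kronPow_trace', h₂.2, one_pow]
    set q₁' : ℝ := if α + β = 0 then 1 else α/(α+β) with hq₁'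
    set q₂' : ℝ := if α + β = 0 then 0 else β/(α+β) with hq₂'
    have hq1 : (α+β) * q₁' = α := by
      by_cases h : α + β = 0
      · rw [hq₁', if_pos h, h, (hz0 h).1, zero_mul]
      · rw [hq₁', if_neg h]; field_simp
    have hq2 : (α+β) * q₂' = β := by
      by_cases h : α + β = 0
      · rw [hq₂', if_pos h, h, (hz0 h).2, zero_mul]
      · rw [hq₂', if_neg h]; field_simp
    have hq1nn : 0 ≤ q₁' := by
      by_cases h : α + β = 0
      · rw [hq₁', if_pos h]; norm_num
      · rw [hq₁', if_neg h]
        have : 0 < α + β := lt_of_le_of_ne (by linarith) (Ne.symm h)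
        positivity
    have hq2nn : 0 ≤ q₂' := by
      by_cases h : α + β = 0
      · rw [hq₂', if_pos h]
      · rw [hq₂', if_neg h]
        have : 0 < α + β := lt_of_le_of_ne (by linarith) (Ne.symm h)
        positivity
    have hqsum : q₁' + q₂' = 1 := by
      by_cases h : α + β = 0
      · rw [hq₁', hq₂', if_pos h, if_pos h]; norm_num
      · rw [hq₁', hq₂', if_neg h, if_neg h]; field_simp
    obtain ⟨k1, k2, k3, k4⟩ := keyR hT hα hβ habR hq1 hq2
    have hρq : ∀ (ρ : Matrix (Fin d) (Fin d) ℂ) (q : ℝ), ρ.trace = 1 →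
        (ρ * ((q:ℂ) • (1 : Matrix (Fin d) (Fin d) ℂ))).trace = ((q:ℝ):ℂ) := by
      intro ρ q hρ
      rw [Matrix.mul_smul, Matrix.mul_one, Matrix.trace_smul, hρ, smul_eq_mul, mul_one]
    refine csInf_le ⟨0, ?_⟩ ?_
    · rintro c ⟨Λp, Λm, lp, lm, _, _, hlp, hlm, _, _, rfl⟩
      linarith
    · refine ⟨cloneMap Pp Pm (kronPow ρ₁ n) (kronPow ρ₂ n),
        cloneMap ((q₁':ℂ) • 1) ((q₂':ℂ) • 1) (kronPow ρ₁ n) (kronPow ρ₂ n), 2/T, 2/T - 1,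
        ⟨cloneMap_choi_posSemidef hPp hPm hσ₁ hσ₂, fun A => cloneMap_trace hsum ht₁ ht₂ A⟩,
        ⟨cloneMap_choi_posSemidef (smul_one_posSemidef hq1nn) (smul_one_posSemidef hq2nn) hσ₁ hσ₂,
         fun A => cloneMap_trace (by rw [← add_smul]; norm_cast; rw [hqsum, one_smul]) ht₁ ht₂ A⟩,
        hlp0, hlm0, by ring, ?_, by ring⟩
      intro i
      fin_cases i
      · show ((2/T : ℝ):ℂ) • cloneMap Pp Pm (kronPow ρ₁ n) (kronPow ρ₂ n) ρ₁ -
          ((2/T - 1 : ℝ):ℂ) • cloneMap ((q₁':ℂ) • 1) ((q₂':ℂ) • 1)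
            (kronPow ρ₁ n) (kronPow ρ₂ n) ρ₁ = kronPow ρ₁ n
        rw [cloneMap_apply, cloneMap_apply, h1p, hb, hρq ρ₁ q₁' h₁.2, hρq ρ₁ q₂' h₁.2,
          smul_add, smul_add, smul_smul, smul_smul, smul_smul, smul_smul, two_smul_combo,
          show ((2/T:ℝ):ℂ) * ((1 - β:ℝ):ℂ) - ((2/T - 1:ℝ):ℂ) * ((q₁':ℝ):ℂ) = 1 by
            exact_mod_cast congrArg Complex.ofReal k1,
          show ((2/T:ℝ):ℂ) * ((β:ℝ):ℂ) - ((2/T - 1:ℝ):ℂ) * ((q₂':ℝ):ℂ) = 0 by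
            exact_mod_cast congrArg Complex.ofReal k2,
          one_smul, zero_smul, add_zero]
      · show ((2/T : ℝ):ℂ) • cloneMap Pp Pm (kronPow ρ₁ n) (kronPow ρ₂ n) ρ₂ -
          ((2/T - 1 : ℝ):ℂ) • cloneMap ((q₁':ℂ) • 1) ((q₂':ℂ) • 1)
            (kronPow ρ₁ n) (kronPow ρ₂ n) ρ₂ = kronPow ρ₂ n
        rw [cloneMap_apply, cloneMap_apply, ha, h2m, hρq ρ₂ q₁' h₂.2, hρq ρ₂ q₂' h₂.2,
          smul_add, smul_add, smul_smul, smul_smul, smul_smul, smul_smul, two_smul_combo,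
          show ((2/T:ℝ):ℂ) * ((α:ℝ):ℂ) - ((2/T - 1:ℝ):ℂ) * ((q₁':ℝ):ℂ) = 0 by
            exact_mod_cast congrArg Complex.ofReal k3,
          show ((2/T:ℝ):ℂ) * ((1 - α:ℝ):ℂ) - ((2/T - 1:ℝ):ℂ) * ((q₂':ℝ):ℂ) = 1 by
            exact_mod_cast congrArg Complex.ofReal k4,
          one_smul, zero_smul, zero_add]
  · refine ⟨Pp, Pm, hPp, hPm, hsum, htr, ?_⟩
    have hq1 : (α+β) * (α/(α+β)) = α := by
      by_cases h : α + β = 0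
      · rw [h, zero_mul, (hz0 h).1]
      · field_simp
    have hq2 : (α+β) * (β/(α+β)) = β := by
      by_cases h : α + β = 0
      · rw [h, zero_mul, (hz0 h).2]
      · field_simp
    obtain ⟨k1, k2, k3, k4⟩ := keyR hT hα hβ habR hq1 hq2
    have hdiv1 : (ρ₂ * Pp).trace / ((ρ₂ * Pp).trace + (ρ₁ * Pm).trace) =
        ((α/(α+β) : ℝ) : ℂ) := by
      rw [ha, hb]; push_cast; ring
    have hdiv2 : (ρ₁ * Pm).trace / ((ρ₂ * Pp).trace + (ρ₁ * Pm).trace) =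
        ((β/(α+β) : ℝ) : ℂ) := by
      rw [ha, hb]; push_cast; ring
    have hηm : ((2/T : ℝ):ℂ) - 1 = ((2/T - 1 : ℝ):ℂ) := by push_cast; ring
    refine ⟨?_, ?_⟩
    · show ((2/T : ℝ):ℂ) • ((ρ₁ * Pp).trace • E00 + (ρ₁ * Pm).trace • E11) -
        (((2/T : ℝ):ℂ) - 1) • (_ • E00 + _ • E11) = E00
      rw [hdiv1, hdiv2, hηm, h1p, hb,
        smul_add, smul_add, smul_smul, smul_smul, smul_smul, smul_smul, two_smul_combo,
        show ((2/T:ℝ):ℂ) * ((1 - β:ℝ):ℂ) - ((2/T - 1:ℝ):ℂ) * ((α/(α+β):ℝ):ℂ) = 1 by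
          exact_mod_cast congrArg Complex.ofReal k1,
        show ((2/T:ℝ):ℂ) * ((β:ℝ):ℂ) - ((2/T - 1:ℝ):ℂ) * ((β/(α+β):ℝ):ℂ) = 0 by
          exact_mod_cast congrArg Complex.ofReal k2,
        one_smul, zero_smul, add_zero]
    · show ((2/T : ℝ):ℂ) • ((ρ₂ * Pp).trace • E00 + (ρ₂ * Pm).trace • E11) -
        (((2/T : ℝ):ℂ) - 1) • (_ • E00 + _ • E11) = E11
      rw [hdiv1, hdiv2, hηm, ha, h2m,
        smul_add, smul_add, smul_smul, smul_smul, smul_smul, smul_smul, two_smul_combo,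
        show ((2/T:ℝ):ℂ) * ((α:ℝ):ℂ) - ((2/T - 1:ℝ):ℂ) * ((α/(α+β):ℝ):ℂ) = 0 by
          exact_mod_cast congrArg Complex.ofReal k3,
        show ((2/T:ℝ):ℂ) * ((1 - α:ℝ):ℂ) - ((2/T - 1:ℝ):ℂ) * ((β/(α+β):ℝ):ℂ) = 1 by
          exact_mod_cast congrArg Complex.ofReal k4,
        one_smul, zero_smul, zero_add]
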